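/- In the symmetric satisficing duopoly with uniform willingness-to-pay on [0,1], there exist at least two distinct pure-strategy Nash equilibria, namely (1/2, 3/8) and (3/8, 1/2). -/
import Mathlib


/-- Seller's revenue in the symmetric satisficing duopoly:
`Rev pi pj` is the revenue of the seller pricing at `pi` when the other prices at `pj`. -/
noncomputable def Rev (pi pj : ℝ) : ℝ :=
  pi * ((1 / 2) * (1 - pi) + (1 / 2) * max (pj - pi) 0)

/-- `(p1, p2)` is a pure-strategy Nash equilibrium: each price globally maximizes
the corresponding seller's revenue on `[0,1]` given the other's price. -/
def IsNE (p1 p2 : ℝ) : Prop :=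
  (∀ p ∈ Set.Icc (0 : ℝ) 1, Rev p p2 ≤ Rev p1 p2) ∧
  (∀ p ∈ Set.Icc (0 : ℝ) 1, Rev p p1 ≤ Rev p2 p1)

lemma br1 : ∀ p ∈ Set.Icc (0 : ℝ) 1, Rev p (3/8) ≤ Rev (1/2) (3/8) := by
  intro p ⟨h0, h1⟩
  unfold Rev
  rcases le_or_gt p (3/8) with h | h
  · rw [max_eq_left (by linarith), max_eq_right (by norm_num)]
    nlinarith [sq_nonneg (p - 11/32)]
  · rw [max_eq_right (by linarith), max_eq_right (by norm_num)]
    nlinarith [sq_nonneg (p - 1/2)]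

lemma br2 : ∀ p ∈ Set.Icc (0 : ℝ) 1, Rev p (1/2) ≤ Rev (3/8) (1/2) := by
  intro p ⟨h0, h1⟩
  unfold Rev
  rcases le_or_gt p (1/2) with h | h
  · rw [max_eq_left (by linarith), max_eq_left (by norm_num)]
    nlinarith [sq_nonneg (p - 3/8)]
  · rw [max_eq_right (by linarith), max_eq_left (by norm_num)]
    nlinarith [sq_nonneg (p - 1/2)]

/-- There are (at least) two distinct pure-strategy Nash equilibria:
`(1/2, 3/8)` and `(3/8, 1/2)`. -/
theorem stmt2 :
    IsNE (1 / 2) (3 / 8) ∧ IsNE (3 / 8) (1 / 2) ∧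
    ((1 / 2, 3 / 8) : ℝ × ℝ) ≠ (3 / 8, 1 / 2) := by
  refine ⟨⟨?_, ?_⟩, ⟨?_, ?_⟩, by norm_num⟩
  · exact fun p hp => by simpa using br1 p hp
  · exact fun p hp => by simpa using br2 p hp
  · exact fun p hp => by simpa using br2 p hp
  · exact fun p hp => by simpa using br1 p hp
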